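/- arXiv:1803.08155 — 2 statements merged into one kernel-verified Lean document; each statement's English description precedes it below -/
import Mathlib

section
/- The following matrix identity holds: Y_aᵀY_a − B̄ᵀ(Y_bᵀY_b + F_bb)B̄ + F_ab F_bb⁻¹ F_ba = (Y_a − Y_b F_{a|b})ᵀ (I_n + Y_b F_bb⁻¹ Y_bᵀ)⁻¹ (Y_a − Y_b F_{a|b}), where I_n + Y_b F_bb⁻¹ Y_bᵀ is positive definite, hence invertible. (Proposition 5.) -/
open Matrix

private lemma prop5_aux {n m q : ℕ}
    (Ya E : Matrix (Fin n) (Fin q) ℝ) (Yb : Matrix (Fin n) (Fin m) ℝ)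
    (M Minv G : Matrix (Fin m) (Fin m) ℝ) (B Fba : Matrix (Fin m) (Fin q) ℝ)
    (hMM : M * Minv = 1) (hMM' : Minv * M = 1) (hMsy : Mᵀ = M) (hMis : Minvᵀ = Minv)
    (hE : E = Ya - Yb * (G * Fba)) (hGsy : Gᵀ = G)
    (hkey : Minv * (Ybᵀ * E) = B - G * Fba)
    (hMB : M * B = Ybᵀ * Ya + Fba)
    (h5 : (G * Fba)ᵀ * M * (G * Fba)
        = (G * Fba)ᵀ * (Ybᵀ * Yb) * (G * Fba) + Fbaᵀ * G * Fba) :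
    Yaᵀ * Ya - Bᵀ * M * B + Fbaᵀ * G * Fba = Eᵀ * (1 - Yb * Minv * Ybᵀ) * E := by
  have hBtM : Bᵀ * M = (Ybᵀ * Ya + Fba)ᵀ := by
    rw [← hMsy, ← Matrix.transpose_mul, hMB]
  -- RHS = EᵀE - (B - G Fba)ᵀ M (B - G Fba)
  have hRHS : Eᵀ * (1 - Yb * Minv * Ybᵀ) * E
      = Eᵀ * E - (B - G * Fba)ᵀ * M * (B - G * Fba) := by
    rw [← hkey]
    rw [Matrix.transpose_mul, Matrix.transpose_mul, hMis, Matrix.transpose_transpose]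
    rw [Matrix.mul_sub, Matrix.sub_mul, Matrix.mul_one]
    congr 1
    calc Eᵀ * (Yb * Minv * Ybᵀ) * E
        = Eᵀ * Yb * Minv * (M * (Minv * (Ybᵀ * E))) := by
          rw [← Matrix.mul_assoc M, hMM, Matrix.one_mul]
          simp only [Matrix.mul_assoc]
      _ = Eᵀ * Yb * Minv * M * (Minv * (Ybᵀ * E)) := by rw [Matrix.mul_assoc (Eᵀ * Yb * Minv) M]
  rw [hRHS]
  -- expand the quadratic form
  have h3 : Bᵀ * M * (G * Fba) = (Ybᵀ * Ya + Fba)ᵀ * (G * Fba) := by rw [hBtM]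
  have h4 : (G * Fba)ᵀ * M * B = (G * Fba)ᵀ * (Ybᵀ * Ya + Fba) := by
    rw [Matrix.mul_assoc, hMB]
  have hexp : (B - G * Fba)ᵀ * M * (B - G * Fba)
      = Bᵀ * M * B - (Ybᵀ * Ya + Fba)ᵀ * (G * Fba) - (G * Fba)ᵀ * (Ybᵀ * Ya + Fba)
        + ((G * Fba)ᵀ * (Ybᵀ * Yb) * (G * Fba) + Fbaᵀ * G * Fba) := by
    rw [Matrix.transpose_sub, Matrix.sub_mul, Matrix.sub_mul, Matrix.mul_sub, Matrix.mul_sub,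
      h3, h4, h5]
    abel
  rw [hexp, hE]
  simp only [Matrix.transpose_sub, Matrix.transpose_add, Matrix.transpose_mul,
    Matrix.transpose_transpose, hGsy, Matrix.sub_mul, Matrix.mul_sub, Matrix.add_mul,
    Matrix.mul_add, Matrix.mul_assoc]
  abel

/-- Proposition 5: with B̄ = (Y_bᵀY_b + F_bb)⁻¹(Y_bᵀY_a + F_ba) and
F_{a|b} = F_bb⁻¹F_ba, one has
Y_aᵀY_a − B̄ᵀ(Y_bᵀY_b + F_bb)B̄ + F_abF_bb⁻¹F_ba
  = (Y_a − Y_bF_{a|b})ᵀ(I_n + Y_bF_bb⁻¹Y_bᵀ)⁻¹(Y_a − Y_bF_{a|b}),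
where I_n + Y_bF_bb⁻¹Y_bᵀ is positive definite, hence invertible. -/
theorem prop5_matrix_identity
    (n m q : ℕ) (hn : 0 < n) (hm : 0 < m) (hq : 0 < q)
    (Ya : Matrix (Fin n) (Fin q) ℝ) (Yb : Matrix (Fin n) (Fin m) ℝ)
    (Fbb : Matrix (Fin m) (Fin m) ℝ) (hFbb : Fbb.PosDef)
    (Fba : Matrix (Fin m) (Fin q) ℝ) :
    ((1 : Matrix (Fin n) (Fin n) ℝ) + Yb * Fbb⁻¹ * Ybᵀ).PosDef ∧
    Yaᵀ * Ya
      - ((Ybᵀ * Yb + Fbb)⁻¹ * (Ybᵀ * Ya + Fba))ᵀ * (Ybᵀ * Yb + Fbb) *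
          ((Ybᵀ * Yb + Fbb)⁻¹ * (Ybᵀ * Ya + Fba))
      + Fbaᵀ * Fbb⁻¹ * Fba
    = (Ya - Yb * (Fbb⁻¹ * Fba))ᵀ *
        ((1 : Matrix (Fin n) (Fin n) ℝ) + Yb * Fbb⁻¹ * Ybᵀ)⁻¹ *
        (Ya - Yb * (Fbb⁻¹ * Fba)) := by
  have hct : ∀ {a b : ℕ} (A : Matrix (Fin a) (Fin b) ℝ), Aᴴ = Aᵀ := by
    intro a b A; ext i j; simp [conjTranspose_apply]
  have hGpd : Fbb⁻¹.PosDef := hFbb.inv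
  have hsemi : (Yb * Fbb⁻¹ * Ybᵀ).PosSemidef := by
    have := hGpd.posSemidef.mul_mul_conjTranspose_same Yb
    rwa [hct] at this
  have hPD : ((1 : Matrix (Fin n) (Fin n) ℝ) + Yb * Fbb⁻¹ * Ybᵀ).PosDef :=
    Matrix.PosDef.add_posSemidef Matrix.PosDef.one hsemi
  refine ⟨hPD, ?_⟩
  have hMpd : (Ybᵀ * Yb + Fbb).PosDef := by
    have h1 : (Ybᵀ * Yb).PosSemidef := by
      have := Matrix.posSemidef_conjTranspose_mul_self Yb
      rwa [hct] at this
    exact Matrix.PosDef.posSemidef_add h1 hFbb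
  have hMM : (Ybᵀ * Yb + Fbb) * (Ybᵀ * Yb + Fbb)⁻¹ = 1 :=
    Matrix.mul_nonsing_inv _ (isUnit_iff_isUnit_det _ |>.1 hMpd.isUnit)
  have hMM' : (Ybᵀ * Yb + Fbb)⁻¹ * (Ybᵀ * Yb + Fbb) = 1 :=
    Matrix.nonsing_inv_mul _ (isUnit_iff_isUnit_det _ |>.1 hMpd.isUnit)
  have hMsy : (Ybᵀ * Yb + Fbb)ᵀ = Ybᵀ * Yb + Fbb := by rw [← hct]; exact hMpd.isHermitian.eq
  have hMis : (Ybᵀ * Yb + Fbb)⁻¹ᵀ = (Ybᵀ * Yb + Fbb)⁻¹ := by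
    rw [Matrix.transpose_nonsing_inv, hMsy]
  have hGsy : Fbb⁻¹ᵀ = Fbb⁻¹ := by rw [← hct]; exact hGpd.isHermitian.eq
  have hFG : Fbb * Fbb⁻¹ = 1 :=
    Matrix.mul_nonsing_inv _ (isUnit_iff_isUnit_det _ |>.1 hFbb.isUnit)
  have hGF : Fbb⁻¹ * Fbb = 1 :=
    Matrix.nonsing_inv_mul _ (isUnit_iff_isUnit_det _ |>.1 hFbb.isUnit)
  -- Woodbury
  have hwood : ((1 : Matrix (Fin n) (Fin n) ℝ) + Yb * Fbb⁻¹ * Ybᵀ)⁻¹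
      = 1 - Yb * (Ybᵀ * Yb + Fbb)⁻¹ * Ybᵀ := by
    have hinvinv : (Fbb⁻¹)⁻¹ = Fbb :=
      Matrix.nonsing_inv_nonsing_inv _ (isUnit_iff_isUnit_det _ |>.1 hFbb.isUnit)
    have h := Matrix.add_mul_mul_inv_eq_sub (1 : Matrix (Fin n) (Fin n) ℝ) Yb Fbb⁻¹ Ybᵀ
      isUnit_one hGpd.isUnit ?_
    · rw [h]
      have heq : (Fbb⁻¹)⁻¹ + Ybᵀ * (1 : Matrix (Fin n) (Fin n) ℝ)⁻¹ * Yb = Ybᵀ * Yb + Fbb := by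
        rw [hinvinv, inv_one, Matrix.mul_one, add_comm]
      rw [heq, inv_one]
      simp [Matrix.mul_assoc]
    · rw [hinvinv, inv_one, Matrix.mul_one]
      have heq : Fbb + Ybᵀ * Yb = Ybᵀ * Yb + Fbb := add_comm _ _
      rw [heq]; exact hMpd.isUnit
  rw [hwood]
  apply prop5_aux Ya _ Yb _ _ _ _ _ hMM hMM' hMsy hMis rfl hGsy ?_ ?_ ?_
  · -- hkey
    have h1 : Ybᵀ * (Ya - Yb * (Fbb⁻¹ * Fba))
        = (Ybᵀ * Ya + Fba) - (Ybᵀ * Yb + Fbb) * (Fbb⁻¹ * Fba) := by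
      rw [Matrix.mul_sub, Matrix.add_mul, ← Matrix.mul_assoc Fbb, hFG, Matrix.one_mul,
        ← Matrix.mul_assoc Ybᵀ Yb]
      abel
    rw [h1, Matrix.mul_sub, ← Matrix.mul_assoc, hMM', Matrix.one_mul]
  · -- hMB
    rw [← Matrix.mul_assoc, hMM, Matrix.one_mul]
  · -- h5
    rw [Matrix.mul_add, Matrix.add_mul]
    congr 1
    rw [Matrix.transpose_mul, hGsy, Matrix.mul_assoc Fbaᵀ Fbb⁻¹ Fbb, hGF,
      Matrix.mul_one, ← Matrix.mul_assoc]
end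

section
/- The Bayes factor for marginal independence is consistent in selection: (a) if r_n → r as n → ∞ for some r with 0 < |r| < 1 (as happens under the alternative H₁ by Assumption 1, since the sample correlation is asymptotically unbiased), then BF^M_n → ∞; (b) if the sequence n·r_n² is bounded (as happens under the null H₀), then BF^M_n → 0. (Lemma 3, marginal case.) -/
open Filter Real

/-- The bivariate gamma function Γ₂(x) = π^{1/2} Γ(x) Γ(x − 1/2). -/
noncomputable def Gamma2 (x : ℝ) : ℝ :=
  Real.sqrt π * Real.Gamma x * Real.Gamma (x - 1 / 2)

/-- The Bayes factor of Lemma 2 in favour of marginal dependence, with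
standardized data (D = I_p, f_ii = f_jj = δ−p−1, r_f = 0, s_ii = s_jj = n)
and sample correlation r_n, so that r_{t,n} = n r_n/(δ−p−1+n). -/
noncomputable def BFmarg (p : ℕ) (δ : ℝ) (r : ℕ → ℝ) (n : ℕ) : ℝ :=
  (Gamma2 ((δ + n - p + 2) / 2) * Real.Gamma ((δ - p + 3) / 2) ^ 2 /
      (Gamma2 ((δ - p + 2) / 2) * Real.Gamma ((δ + n - p + 3) / 2) ^ 2)) *
    (1 - ((n : ℝ) * r n / (δ - p - 1 + n)) ^ 2) ^ (-(δ + n - p + 2) / 2) *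
    ((δ + n - p - 1) / (δ - p - 1))

/-!
Once the Gamma-function normalisations cancel, `BF^M_n = A · ω(y_n) · (1 - r_{t,n}²)^(-y_n)` with
`y_n = (δ + n - p + 2) / 2`, a constant `A > 0` and an Occam factor `ω = occamFactor` satisfying
`y^(-1/2) ≤ ω(y) ≤ 2 (y - 1/2)^(-1/2)` for `y ≥ 5/2`; this is Gautschi's inequality, a consequence of the
log-convexity of `Γ`. Under the alternative, `-log (1 - r_{t,n}²)` stays above some `c > 0`, so the
likelihood factor grows like `exp (c y_n)` and beats the polynomial decay of `ω`. Under the null,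
`y_n r_{t,n}²` stays bounded, hence so does the likelihood factor, and `ω(y_n) → 0` wins.
-/

open Topology

namespace Real

theorem Gamma_add_half_le {x : ℝ} (hx : 0 < x) : Gamma (x + 1 / 2) ≤ √x * Gamma x := by
  have hΓ := Gamma_pos_of_pos hx
  calc Gamma (x + 1 / 2) = Gamma (1 / 2 * x + 1 / 2 * (x + 1)) := by ring_nf
    _ ≤ Gamma x ^ (1 / 2 : ℝ) * Gamma (x + 1) ^ (1 / 2 : ℝ) :=
      Gamma_mul_add_mul_le_rpow_Gamma_mul_rpow_Gamma hx (by linarith) one_half_pos one_half_pos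
        (by norm_num)
    _ = √(x * Gamma x ^ 2) := by
      rw [Gamma_add_one hx.ne', ← mul_rpow hΓ.le (by positivity), ← sqrt_eq_rpow]
      ring_nf
    _ = √x * Gamma x := by rw [sqrt_mul hx.le, sqrt_sq hΓ.le]

theorem mul_Gamma_le_sqrt_mul_Gamma_add_half {x : ℝ} (hx : 0 < x) :
    x * Gamma x ≤ √(x + 1 / 2) * Gamma (x + 1 / 2) := by
  have h := Gamma_add_half_le (by linarith : 0 < x + 1 / 2)
  rwa [add_assoc, add_halves, Gamma_add_one hx.ne'] at h

theorem one_sub_rpow_neg_le_exp {u y : ℝ} (hu₀ : 0 ≤ u) (hu : u ≤ 1 / 2) (hy : 0 ≤ y) :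
    (1 - u) ^ (-y) ≤ exp (2 * (y * u)) := by
  have hv : 0 < 1 - u := by linarith
  have hinv : (1 - u)⁻¹ - 1 ≤ 2 * u := by
    rw [sub_le_iff_le_add, inv_le_comm₀ hv (by linarith), inv_eq_one_div,
      div_le_iff₀ (by linarith)]
    nlinarith
  rw [rpow_def_of_pos hv, exp_le_exp]
  nlinarith [one_sub_inv_le_log_of_pos hv]

end Real

noncomputable def occamFactor (y : ℝ) : ℝ :=
  Gamma y / Gamma (y - 1 / 2) * ((2 * y - 3) / (y - 1 / 2) ^ 2)

theorem occamFactor_nonneg {y : ℝ} (hy : 3 / 2 ≤ y) : 0 ≤ occamFactor y := by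
  have h₁ := Gamma_pos_of_pos (by linarith : 0 < y)
  have h₂ := Gamma_pos_of_pos (by linarith : 0 < y - 1 / 2)
  unfold occamFactor
  have : 0 ≤ 2 * y - 3 := by linarith
  positivity

theorem occamFactor_le {y : ℝ} (hy : 3 / 2 ≤ y) : occamFactor y ≤ 2 / √(y - 1 / 2) := by
  set x := y - 1 / 2 with hx_def
  have hx : 0 < x := by linarith
  have hy' : y = x + 1 / 2 := by ring
  have hΓ := Gamma_pos_of_pos hx
  have hs := sqrt_pos.2 hx
  have hratio : Gamma y / Gamma x ≤ √x := by
    rw [div_le_iff₀ hΓ, hy']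
    exact Gamma_add_half_le hx
  have hlin : (2 * y - 3) / x ^ 2 ≤ 2 / x := by
    rw [div_le_div_iff₀ (by positivity) hx]
    nlinarith
  calc occamFactor y ≤ √x * (2 / x) :=
        mul_le_mul hratio hlin (div_nonneg (by linarith) (by positivity)) hs.le
    _ = 2 / √x := by
        field_simp
        rw [sq_sqrt hx.le]

theorem inv_sqrt_le_occamFactor {y : ℝ} (hy : 5 / 2 ≤ y) : (√y)⁻¹ ≤ occamFactor y := by
  set x := y - 1 / 2 with hx_def
  have hx : 0 < x := by linarith
  have hy' : y = x + 1 / 2 := by ring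
  have hΓ := Gamma_pos_of_pos hx
  have hs := sqrt_pos.2 (by linarith : 0 < y)
  have hratio : x / √y ≤ Gamma y / Gamma x := by
    rw [div_le_div_iff₀ hs hΓ, hy']
    linarith [mul_Gamma_le_sqrt_mul_Gamma_add_half hx]
  have hlin : 1 / x ≤ (2 * y - 3) / x ^ 2 := by
    rw [div_le_div_iff₀ hx (by positivity)]
    nlinarith
  calc (√y)⁻¹ = x / √y * (1 / x) := by field_simp
    _ ≤ occamFactor y := mul_le_mul hratio hlin (by positivity) (by positivity)

theorem tendsto_occamFactor_atTop : Tendsto occamFactor atTop (𝓝 0) := by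
  have hmaj : Tendsto (fun y : ℝ => 2 / √(y - 1 / 2)) atTop (𝓝 0) :=
    tendsto_const_nhds.div_atTop
      (tendsto_sqrt_atTop.comp (tendsto_atTop_add_const_right _ _ tendsto_id))
  refine squeeze_zero' ?_ ?_ hmaj <;> filter_upwards [eventually_ge_atTop (3 / 2)] with y hy
  exacts [occamFactor_nonneg hy, occamFactor_le hy]

noncomputable def postCorr (p : ℕ) (δ : ℝ) (r : ℕ → ℝ) (n : ℕ) : ℝ :=
  n * r n / (δ - p - 1 + n)

theorem tendsto_postCorr {p : ℕ} {δ : ℝ} {r : ℕ → ℝ} {r₀ : ℝ} (hr : Tendsto r atTop (𝓝 r₀)) :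
    Tendsto (postCorr p δ r) atTop (𝓝 r₀) := by
  have h := hr.mul (tendsto_natCast_div_add_atTop (δ - p - 1))
  rw [mul_one] at h
  refine h.congr fun n => ?_
  rw [postCorr, add_comm (n : ℝ)]
  ring

theorem add_mul_postCorr_sq_le {p : ℕ} {δ : ℝ} (hδ : (p : ℝ) + 1 < δ) (r : ℕ → ℝ) (n : ℕ) :
    (δ - p - 1 + n) * postCorr p δ r n ^ 2 ≤ n * r n ^ 2 := by
  have ha : 0 < δ - p - 1 := by linarith
  have hn : (0 : ℝ) ≤ n := Nat.cast_nonneg n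
  rw [postCorr, div_pow, mul_div_assoc', div_le_iff₀ (by positivity)]
  nlinarith [mul_nonneg (mul_nonneg (add_nonneg ha.le hn) (mul_nonneg hn (sq_nonneg (r n)))) ha.le]

theorem tendsto_BFmarg_exponent (p : ℕ) (δ : ℝ) :
    Tendsto (fun n : ℕ => (δ + n - p + 2) / 2) atTop atTop := by
  refine Tendsto.atTop_div_const two_pos (tendsto_atTop_add_const_right _ _ ?_)
  simpa only [sub_eq_add_neg] using tendsto_atTop_add_const_right _ _
    (tendsto_atTop_add_const_left _ δ tendsto_natCast_atTop_atTop)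

theorem exists_pos_BFmarg_eq {p : ℕ} {δ : ℝ} (hδ : (p : ℝ) + 1 < δ) (r : ℕ → ℝ) :
    ∃ A > 0, ∀ n : ℕ, BFmarg p δ r n = A * occamFactor ((δ + n - p + 2) / 2) *
      (1 - postCorr p δ r n ^ 2) ^ (-((δ + n - p + 2) / 2)) := by
  have ha : 0 < δ - p - 1 := by linarith
  have hΓ₀ : 0 < Gamma ((δ - p + 3) / 2) := Gamma_pos_of_pos (by linarith)
  have hΓ2₀ : 0 < Gamma2 ((δ - p + 2) / 2) := by
    have h₁ : 0 < Gamma ((δ - p + 2) / 2) := Gamma_pos_of_pos (by linarith)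
    have h₂ : 0 < Gamma ((δ - p + 2) / 2 - 1 / 2) := Gamma_pos_of_pos (by linarith)
    unfold Gamma2
    positivity
  refine ⟨√π * Gamma ((δ - p + 3) / 2) ^ 2 / (Gamma2 ((δ - p + 2) / 2) * (δ - p - 1)),
    by positivity, fun n => ?_⟩
  have hexp : -(δ + n - p + 2) / 2 = -((δ + n - p + 2) / 2) := by ring
  have hnext : (δ + n - p + 3) / 2 = (δ + n - p + 2) / 2 - 1 / 2 + 1 := by ring
  have hlin : δ + n - p - 1 = 2 * ((δ + n - p + 2) / 2) - 3 := by ring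
  have hx : 0 < (δ + n - p + 2) / 2 - 1 / 2 := by have := Nat.cast_nonneg (α := ℝ) n; linarith
  rw [BFmarg, occamFactor, postCorr, Gamma2, hnext, Gamma_add_one hx.ne', hlin, hexp]
  generalize (δ + n - p + 2) / 2 = y at hx ⊢
  have hΓ := Gamma_pos_of_pos hx
  field_simp

section

variable {p : ℕ} {δ : ℝ} {r : ℕ → ℝ}

theorem tendsto_BFmarg_atTop (hδ : (p : ℝ) + 1 < δ) {r₀ : ℝ} (hr : Tendsto r atTop (𝓝 r₀))
    (hr₀ : 0 < |r₀|) (hr₁ : |r₀| < 1) : Tendsto (BFmarg p δ r) atTop atTop := by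
  obtain ⟨A, hA, hBF⟩ := exists_pos_BFmarg_eq hδ r
  have hy := tendsto_BFmarg_exponent p δ
  have hv : Tendsto (fun n => 1 - postCorr p δ r n ^ 2) atTop (𝓝 (1 - r₀ ^ 2)) :=
    ((tendsto_postCorr hr).pow 2).const_sub 1
  have hv₀ : 0 < 1 - r₀ ^ 2 := by nlinarith [sq_abs r₀]
  have hv₁ : 1 - r₀ ^ 2 < 1 := by nlinarith [sq_abs r₀]
  set c := -log (1 - r₀ ^ 2) / 2 with hc_def
  have hc : 0 < c := by linarith [log_neg hv₀ hv₁]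
  have hlog : ∀ᶠ n in atTop, log (1 - postCorr p δ r n ^ 2) < -c :=
    ((continuousAt_log hv₀.ne').tendsto.comp hv).eventually_lt_const (by linarith)
  refine tendsto_atTop_mono' _ ?_
    (((tendsto_exp_mul_div_rpow_atTop (1 / 2) c hc).comp hy).const_mul_atTop hA)
  filter_upwards [hlog, hv.eventually_const_lt hv₀, hy.eventually_ge_atTop (5 / 2)]
    with n hlogn hvn hyn
  rw [hBF n, mul_assoc, Function.comp_apply, div_eq_inv_mul, ← sqrt_eq_rpow]
  gcongr A * ?_
  refine mul_le_mul (inv_sqrt_le_occamFactor hyn) ?_ (exp_pos _).le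
    (occamFactor_nonneg (by linarith))
  rw [rpow_def_of_pos hvn, exp_le_exp]
  nlinarith

theorem tendsto_BFmarg_zero (hδ : (p : ℝ) + 1 < δ)
    (hK : ∃ K : ℝ, ∀ n : ℕ, (n : ℝ) * r n ^ 2 ≤ K) :
    Tendsto (BFmarg p δ r) atTop (𝓝 0) := by
  obtain ⟨K, hK⟩ := hK
  obtain ⟨A, hA, hBF⟩ := exists_pos_BFmarg_eq hδ r
  set y : ℕ → ℝ := fun n => (δ + n - p + 2) / 2 with hy_def
  set u : ℕ → ℝ := fun n => postCorr p δ r n ^ 2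
  have hBF' : ∀ n, BFmarg p δ r n = A * occamFactor (y n) * (1 - u n) ^ (-y n) := hBF
  have hy : Tendsto y atTop atTop := tendsto_BFmarg_exponent p δ
  have hyu : ∀ᶠ n in atTop, y n * u n ≤ K := by
    filter_upwards [eventually_ge_atTop 3] with n hn
    have hn' : (3 : ℝ) ≤ n := by exact_mod_cast hn
    calc y n * u n ≤ (δ - p - 1 + n) * postCorr p δ r n ^ 2 :=
          mul_le_mul_of_nonneg_right (by simp only [hy_def]; linarith) (sq_nonneg _)
      _ ≤ K := (add_mul_postCorr_sq_le hδ r n).trans (hK n)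
  have hu : Tendsto u atTop (𝓝 0) := by
    refine squeeze_zero' (Eventually.of_forall fun n => sq_nonneg _) ?_
      ((tendsto_const_nhds (x := K)).div_atTop hy)
    filter_upwards [hyu, hy.eventually_gt_atTop 0] with n hn hyn
    rwa [le_div_iff₀ hyn, mul_comm]
  have hmaj : Tendsto (fun n => A * occamFactor (y n) * exp (2 * K)) atTop (𝓝 0) := by
    simpa using ((tendsto_occamFactor_atTop.comp hy).const_mul A).mul_const (exp (2 * K))
  refine squeeze_zero' ?_ ?_ hmaj
  all_goals filter_upwards [hyu, hu.eventually_lt_const (by norm_num : (0 : ℝ) < 1 / 2),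
    hy.eventually_ge_atTop (3 / 2)] with n hyun hun hyn
  · rw [hBF' n]
    have := occamFactor_nonneg hyn
    have : 0 < 1 - u n := by linarith
    positivity
  · rw [hBF' n]
    have := occamFactor_nonneg hyn
    gcongr
    exact (one_sub_rpow_neg_le_exp (sq_nonneg _) hun.le (by linarith)).trans
        (exp_le_exp.2 (by linarith))

end

theorem bayes_factor_marginal_consistent_general
    (p : ℕ) (δ : ℝ) (hδ : (p : ℝ) + 1 < δ)
    (r : ℕ → ℝ) :
    (∀ r₀ : ℝ, Tendsto r atTop (nhds r₀) → 0 < |r₀| → |r₀| < 1 →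
        Tendsto (BFmarg p δ r) atTop atTop) ∧
    ((∃ K : ℝ, ∀ n : ℕ, (n : ℝ) * r n ^ 2 ≤ K) →
        Tendsto (BFmarg p δ r) atTop (nhds 0)) :=
  ⟨fun _ hr hr₀ hr₁ => tendsto_BFmarg_atTop hδ hr hr₀ hr₁, tendsto_BFmarg_zero hδ⟩

/-- Lemma 3, marginal case: consistency in selection of the Bayes factor for
marginal independence. (a) Under the alternative (r_n → r with 0 < |r| < 1),
BF^M_n → ∞; (b) under the null (n·r_n² bounded), BF^M_n → 0. -/
theorem bayes_factor_marginal_consistent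
    (p : ℕ) (hp : 0 < p) (δ : ℝ) (hδ : (p : ℝ) + 1 < δ)
    (r : ℕ → ℝ) (hr : ∀ n, r n ∈ Set.Ioo (-1 : ℝ) 1) :
    (∀ r₀ : ℝ, Tendsto r atTop (nhds r₀) → 0 < |r₀| → |r₀| < 1 →
        Tendsto (BFmarg p δ r) atTop atTop) ∧
    ((∃ K : ℝ, ∀ n : ℕ, (n : ℝ) * r n ^ 2 ≤ K) →
        Tendsto (BFmarg p δ r) atTop (nhds 0)) :=
  bayes_factor_marginal_consistent_general p δ hδ r
end
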